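/- arXiv:1404.3135 — 2 statements merged into one kernel-verified Lean document; each statement's English description precedes it below -/
import Mathlib

section
/- Let p ≥ 3 be a prime, let r ≥ 1 and let N₁,…,N_r be positive integers none of which is divisible by p. Set N = N₁+⋯+N_r, write each Nᵢ = sᵢp + tᵢ with sᵢ ≥ 0 and tᵢ ∈ {1,…,p−1}, and set S = s₁+⋯+s_r. If (N+r−2)(p−1)/2 = N − S − 1, then (N+r−2)(p−1)/2 ≤ 1, i.e. the quantity g = (N+r−2)(p−1)/2 satisfies g ≤ 1. -/
/-- Key Diophantine step: if `(N+r−2)(p−1)/2 = N − S − 1` with the stated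
decompositions, then `g = (N+r−2)(p−1)/2 ≤ 1`. -/
theorem stmt_1 (p r : ℕ) (hp : p.Prime) (hp3 : 3 ≤ p) (hr : 1 ≤ r)
    (Nv s t : Fin r → ℕ)
    (hNpos : ∀ i, 0 < Nv i) (hnd : ∀ i, ¬ p ∣ Nv i)
    (hdecomp : ∀ i, Nv i = s i * p + t i)
    (ht1 : ∀ i, 1 ≤ t i) (ht2 : ∀ i, t i ≤ p - 1)
    (N S : ℕ) (hN : N = ∑ i, Nv i) (hS : S = ∑ i, s i)
    (heq : (((N : ℚ) + r - 2) * ((p : ℚ) - 1)) / 2 = (N : ℚ) - S - 1) :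
    (((N : ℚ) + r - 2) * ((p : ℚ) - 1)) / 2 ≤ 1 := by
  set T : ℕ := ∑ i, t i with hT
  have hNST : N = S * p + T := by
    rw [hN, hS, hT, Finset.sum_mul, ← Finset.sum_add_distrib]
    exact Finset.sum_congr rfl fun i _ => hdecomp i
  have hTr : r ≤ T := by
    calc r = ∑ _i : Fin r, 1 := by simp
    _ ≤ T := Finset.sum_le_sum fun i _ => ht1 i
  have hTub : T ≤ r * (p - 1) := by
    calc T ≤ ∑ _i : Fin r, (p - 1) := Finset.sum_le_sum fun i _ => ht2 i
    _ = r * (p - 1) := by simp [mul_comm]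
  -- move to ℚ
  have hp1 : (1 : ℕ) ≤ p := by omega
  have hNq : (N : ℚ) = S * p + T := by exact_mod_cast hNST
  have hTrq : (r : ℚ) ≤ T := by exact_mod_cast hTr
  have hTubq : (T : ℚ) ≤ r * ((p : ℚ) - 1) := by
    have : (T : ℚ) ≤ (r * (p - 1) : ℕ) := by exact_mod_cast hTub
    calc (T : ℚ) ≤ ((r * (p - 1) : ℕ) : ℚ) := this
    _ = r * (((p - 1 : ℕ) : ℚ)) := by push_cast; ring
    _ = r * ((p : ℚ) - 1) := by rw [Nat.cast_sub hp1]; norm_num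
  have hpq : (3 : ℚ) ≤ p := by exact_mod_cast hp3
  have hrq : (1 : ℚ) ≤ r := by exact_mod_cast hr
  have hSq : (0 : ℚ) ≤ S := by positivity
  have heq2 : ((N : ℚ) + r - 2) * ((p : ℚ) - 1) = 2 * ((N : ℚ) - S - 1) := by
    field_simp at heq; linarith
  rw [heq]
  -- key identity
  have E : (S : ℚ) * ((p : ℚ) - 2) * ((p : ℚ) - 1) + ((p : ℚ) - 3) * ((T : ℚ) - 1)
      + ((p : ℚ) - 1) * ((r : ℚ) - 1) = 0 := by
    rw [hNq] at heq2; ring_nf at heq2 ⊢; linarith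
  have hA : (0 : ℚ) ≤ (S : ℚ) * ((p : ℚ) - 2) * ((p : ℚ) - 1) := by
    apply mul_nonneg; apply mul_nonneg hSq <;> linarith; linarith
  have hB : (0 : ℚ) ≤ ((p : ℚ) - 3) * ((T : ℚ) - 1) := by
    apply mul_nonneg <;> linarith
  have hC : (0 : ℚ) ≤ ((p : ℚ) - 1) * ((r : ℚ) - 1) := by
    apply mul_nonneg <;> linarith
  have hA0 : (S : ℚ) * ((p : ℚ) - 2) * ((p : ℚ) - 1) = 0 := by linarith
  have hB0 : ((p : ℚ) - 3) * ((T : ℚ) - 1) = 0 := by linarith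
  have hC0 : ((p : ℚ) - 1) * ((r : ℚ) - 1) = 0 := by linarith
  have hS0 : (S : ℚ) = 0 := by
    rcases mul_eq_zero.mp hA0 with h | h
    · rcases mul_eq_zero.mp h with h' | h' ; exact h' ; linarith
    · linarith
  have hr1 : (r : ℚ) = 1 := by
    rcases mul_eq_zero.mp hC0 with h | h
    · linarith
    · linarith
  have hT2 : (T : ℚ) ≤ 2 := by
    rcases mul_eq_zero.mp hB0 with h | h
    · -- p = 3, so T ≤ r*(p-1) = 2
      rw [hr1] at hTubq; nlinarith
    · linarith
  rw [hNq, hS0]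
  linarith
end

section
/- Let G be a finite group with a normal subgroup N such that the characteristic p of the field k does not divide the order of N and G/N is cyclic. Then for every finitely generated k[G]-module M, dim_k M^G = dim_k M_G. -/
open Module

/-- The augmentation submodule: generated by the elements `ρ g v − v`.
The coinvariants `M_G` are the quotient `V ⧸ augmentation ρ`. -/
def augmentation {k G V : Type*} [Field k] [Group G] [AddCommGroup V] [Module k V]
    (ρ : Representation k G V) : Submodule k V :=
  Submodule.span k {x | ∃ (g : G) (v : V), ρ g v - v = x}

/-- If `G` is a finite group with a normal subgroup `N` such that the
characteristic of `k` does not divide `|N|`, and `G/N` is cyclic, then for every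
finite-dimensional `k[G]`-module `M`, `dim M^G = dim M_G`. -/
theorem stmt_7 (k : Type*) [Field k]
    (G : Type*) [Group G] [Fintype G] (N : Subgroup G) [N.Normal]
    (hN : ¬ (ringChar k ∣ Nat.card N))
    (hcyc : IsCyclic (G ⧸ N))
    (V : Type*) [AddCommGroup V] [Module k V] [FiniteDimensional k V]
    (ρ : Representation k G V) :
    finrank k ρ.invariants = finrank k (V ⧸ augmentation ρ) := by
  classical
  haveI := ringChar.charP k
  haveI : Fintype N := Fintype.ofFinite N
  have hNn : N.Normal := inferInstance
  set c : k := (Nat.card N : k) with hc_def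
  have hc : c ≠ 0 := fun h => hN ((CharP.cast_eq_zero_iff k (ringChar k) _).mp h)
  have hcard : (Fintype.card N : k) = c := by rw [hc_def, Nat.card_eq_fintype_card]
  -- the averaging operator
  set e : V →ₗ[k] V := c⁻¹ • ∑ n : N, (ρ (n : G) : V →ₗ[k] V) with he_def
  have he_apply : ∀ v : V, e v = c⁻¹ • ∑ n : N, ρ (n : G) v := by
    intro v
    simp [he_def, LinearMap.sum_apply]
  -- e ∘ ρ n = e for n ∈ N
  have heρ : ∀ (n : N) (v : V), e (ρ (n : G) v) = e v := by
    intro n v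
    rw [he_apply, he_apply]
    congr 1
    have : ∀ m : N, ρ (m : G) (ρ (n : G) v) = ρ ((m * n : N) : G) v := by
      intro m; simp [map_mul]
    simp_rw [this]
    exact Fintype.sum_equiv (Equiv.mulRight n) _ _ (fun m => rfl)
  -- ρ n ∘ e = e for n ∈ N
  have hρe : ∀ (n : N) (v : V), ρ (n : G) (e v) = e v := by
    intro n v
    rw [he_apply v, map_smul, map_sum]
    congr 1
    have : ∀ m : N, ρ (n : G) (ρ (m : G) v) = ρ ((n * m : N) : G) v := by
      intro m; simp [map_mul]
    simp_rw [this]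
    exact Fintype.sum_equiv (Equiv.mulLeft n) _ _ (fun m => rfl)
  -- e is idempotent
  have hee : ∀ v : V, e (e v) = e v := by
    intro v
    rw [he_apply (e v)]
    have : ∀ n : N, ρ (n : G) (e v) = e v := fun n => hρe n v
    simp_rw [this, Finset.sum_const, Finset.card_univ]
    rw [← Nat.cast_smul_eq_nsmul k, hcard, smul_smul, inv_mul_cancel₀ hc, one_smul]
  -- e commutes with every ρ g (uses normality of N)
  have hcomm : ∀ (g : G) (v : V), e (ρ g v) = ρ g (e v) := by
    intro g v
    rw [he_apply (ρ g v), he_apply v, map_smul, map_sum]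
    congr 1
    have h1 : ∀ m : N, ρ (m : G) (ρ g v) = ρ ((m : G) * g) v := by
      intro m; simp [map_mul]
    have h2 : ∀ m : N, ρ g (ρ (m : G) v) = ρ (g * (m : G)) v := by
      intro m; simp [map_mul]
    simp_rw [h1, h2]
    let σ : N ≃ N :=
      { toFun := fun m => ⟨g⁻¹ * (m : G) * g, by
          have := hNn.conj_mem _ m.2 g⁻¹; rwa [inv_inv] at this⟩
        invFun := fun m => ⟨g * (m : G) * g⁻¹, hNn.conj_mem _ m.2 g⟩
        left_inv := fun m => Subtype.ext
          (by show g * (g⁻¹ * (m : G) * g) * g⁻¹ = (m : G); group)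
        right_inv := fun m => Subtype.ext
          (by show g⁻¹ * (g * (m : G) * g⁻¹) * g = (m : G); group) }
    refine Fintype.sum_equiv σ _ _ ?_
    intro m
    show ρ ((m : G) * g) v = ρ (g * (g⁻¹ * (m : G) * g)) v
    have hmg : g * (g⁻¹ * (m : G) * g) = (m : G) * g := by group
    rw [hmg]
  -- invariant vectors are fixed by e
  have he_inv : ∀ v : V, (∀ g : G, ρ g v = v) → e v = v := by
    intro v hv
    rw [he_apply]
    have : ∀ n : N, ρ (n : G) v = v := fun n => hv n
    simp_rw [this, Finset.sum_const, Finset.card_univ]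
    rw [← Nat.cast_smul_eq_nsmul k, hcard, smul_smul, inv_mul_cancel₀ hc, one_smul]
  -- v - e v lies in the augmentation ideal
  have hsub_aug : ∀ v : V, v - e v ∈ augmentation ρ := by
    intro v
    have hev : e v - v = c⁻¹ • ∑ n : N, (ρ (n : G) v - v) := by
      rw [he_apply, Finset.sum_sub_distrib, smul_sub, Finset.sum_const, Finset.card_univ,
        ← Nat.cast_smul_eq_nsmul k, hcard, smul_smul, inv_mul_cancel₀ hc, one_smul]
    have : e v - v ∈ augmentation ρ := by
      rw [hev]
      refine Submodule.smul_mem _ _ (Submodule.sum_mem _ fun n _ => ?_)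
      exact Submodule.subset_span ⟨(n : G), v, rfl⟩
    have := Submodule.neg_mem _ this
    rwa [neg_sub] at this
  -- choose a lift of a generator of G ⧸ N
  obtain ⟨q, hq⟩ := hcyc.exists_generator
  obtain ⟨g0, hg0⟩ := QuotientGroup.mk_surjective q
  -- every element of G decomposes as g0 ^ m * n with n ∈ N
  have hdec : ∀ g : G, ∃ (m : ℕ) (n : G), n ∈ N ∧ g = g0 ^ m * n := by
    intro g
    have : (g : G ⧸ N) ∈ Subgroup.zpowers q := hq _
    obtain ⟨m, hm⟩ := mem_powers_iff_mem_zpowers.mpr this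
    refine ⟨m, (g0 ^ m)⁻¹ * g, ?_, by group⟩
    rw [← QuotientGroup.eq]
    rw [← hm, ← hg0]
    simp
  -- the key operator
  set F : V →ₗ[k] V := (ρ g0) ∘ₗ e + LinearMap.id - e - e with hF_def
  have hF_apply : ∀ v : V, F v = ρ g0 (e v) + v - e v - e v := by
    intro v; simp [hF_def]
  -- kernel of F is the invariants
  have hker : LinearMap.ker F = ρ.invariants := by
    ext v
    simp only [LinearMap.mem_ker, Representation.mem_invariants]
    constructor
    · intro hv
      have heFv : e (F v) = 0 := by rw [hv]; simp
      rw [hF_apply] at heFv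
      have h1 : ρ g0 (e v) = e v := by
        rw [map_sub, map_sub, map_add, hcomm, hee] at heFv
        have hz : ρ g0 (e v) - e v = 0 := by rw [← heFv]; abel
        exact sub_eq_zero.mp hz
      have h2 : e v = v := by
        rw [hF_apply, h1] at hv
        have hz : v - e v = 0 := by rw [← hv]; abel
        exact (sub_eq_zero.mp hz).symm
      have hg0v : ρ g0 v = v := by rw [← h2]; exact h1
      have hpow : ∀ m : ℕ, ρ (g0 ^ m) v = v := by
        intro m
        induction m with
        | zero => simp
        | succ m ih => rw [pow_succ, map_mul]; simp only [Module.End.mul_apply, hg0v]; exact ih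
      intro g
      obtain ⟨m, n, hn, rfl⟩ := hdec g
      rw [map_mul]
      have hnv : ρ n v = v := by
        have := hρe ⟨n, hn⟩ v
        rwa [h2] at this
      simp only [Module.End.mul_apply, hnv]
      exact hpow m
    · intro hv
      rw [hF_apply, he_inv v hv, hv g0]
      abel
  -- range of F is the augmentation submodule
  have hran : LinearMap.range F = augmentation ρ := by
    apply le_antisymm
    · rintro _ ⟨v, rfl⟩
      rw [hF_apply]
      have h1 : ρ g0 (e v) - e v ∈ augmentation ρ :=
        Submodule.subset_span ⟨g0, e v, rfl⟩
      have h2 : v - e v ∈ augmentation ρ := hsub_aug v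
      have h3 : (v - e v) - e (v - e v) ∈ augmentation ρ := by
        rw [map_sub, hee, sub_self, sub_zero]; exact h2
      have := Submodule.add_mem _ h1 h2
      have heq : ρ g0 (e v) + v - e v - e v = (ρ g0 (e v) - e v) + (v - e v) := by abel
      rw [heq]
      exact Submodule.add_mem _ h1 h2
    · rw [augmentation, Submodule.span_le]
      rintro _ ⟨g, v, rfl⟩
      -- helper: anything of the form w - e w lies in the range of F
      have step0 : ∀ w : V, w - e w ∈ LinearMap.range F := by
        intro w
        refine ⟨w - e w, ?_⟩
        rw [hF_apply, map_sub, hee, sub_self, map_zero]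
        abel
      have step1 : ∀ u : V, ρ g0 u - u ∈ LinearMap.range F := by
        intro u
        have hmem : e (ρ g0 u) - e u ∈ LinearMap.range F := by
          refine ⟨e u, ?_⟩
          rw [hF_apply, hee, hcomm]
          abel
        have h2 := step0 (ρ g0 u - u)
        rw [map_sub] at h2
        have heq : ρ g0 u - u =
            (e (ρ g0 u) - e u) + ((ρ g0 u - u) - (e (ρ g0 u) - e u)) := by abel
        rw [heq]
        exact Submodule.add_mem _ hmem h2
      have stepN : ∀ (n : N) (u : V), ρ (n : G) u - u ∈ LinearMap.range F := by
        intro n u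
        have h := step0 (ρ (n : G) u - u)
        rwa [map_sub, heρ, sub_self, sub_zero] at h
      have stepPow : ∀ (m : ℕ) (u : V), ρ (g0 ^ m) u - u ∈ LinearMap.range F := by
        intro m
        induction m with
        | zero => intro u; simp
        | succ m ih =>
          intro u
          have heq : ρ (g0 ^ (m + 1)) u - u =
              (ρ g0 (ρ (g0 ^ m) u) - ρ (g0 ^ m) u) + (ρ (g0 ^ m) u - u) := by
            rw [pow_succ', map_mul]
            simp only [Module.End.mul_apply]
            abel
          rw [heq]
          exact Submodule.add_mem _ (step1 _) (ih u)
      obtain ⟨m, n, hn, rfl⟩ := hdec g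
      have heq : ρ (g0 ^ m * n) v - v =
          (ρ (g0 ^ m) (ρ n v) - ρ n v) + (ρ n v - v) := by
        rw [map_mul]; simp only [Module.End.mul_apply]; abel
      rw [SetLike.mem_coe, heq]
      exact Submodule.add_mem _ (stepPow m (ρ n v)) (stepN ⟨n, hn⟩ v)
  -- rank-nullity
  have h1 := LinearMap.finrank_range_add_finrank_ker F
  rw [hran, hker] at h1
  have h2 := Submodule.finrank_quotient_add_finrank (augmentation ρ)
  omega
end
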